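/- Let n ≥ 2 be an integer, 0 < α ≤ 1, and q_s = α·s(n-s)/(n(n-1)) for 1 ≤ s ≤ n-1. Then for every integer 1 ≤ k ≤ n-1, (1/n)·∑_{s=1}^{n-1} q_s^{-1}·min(s,k)·(n - max(s,k)) = ((n-1)/α)·((n-k)(H_{n-1} - H_{n-k}) + k(H_{n-1} - H_{k-1})). -/

import Mathlib

/-- The `j`-th harmonic number `H_j = ∑_{i=1}^j 1/i` (with `H 0 = 0`). -/
noncomputable def H (j : ℕ) : ℝ := ∑ i ∈ Finset.range j, (1 : ℝ) / (i + 1)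

/-
The inverse rates factor as `q_s⁻¹ = α⁻¹ · n(n-1) / (s(n-s))`, so the claim reduces to an
α-free identity for the Green's function `min(s,k)(n - max(s,k)) / (s(n-s))` of simple random
walk on `{0,…,n}`. That function equals `(n-k)/(n-s)` for `s < k` and `k/s` for `s ≥ k`, so the
sum splits into two blocks of consecutive reciprocals, which are differences of harmonic numbers.
-/

open Finset

lemma H_succ (j : ℕ) : H (j + 1) = H j + 1 / ((j : ℝ) + 1) := by
  simp [H, sum_range_succ]

lemma sum_Ioc_one_div_eq_H_sub {a b : ℕ} (h : a ≤ b) :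
    ∑ s ∈ Ioc a b, (1 : ℝ) / s = H b - H a := by
  induction b, h using Nat.le_induction with
  | base => simp
  | succ b hb ih =>
    rw [← Icc_add_one_left_eq_Ioc, sum_Icc_succ_top (by omega), Icc_add_one_left_eq_Ioc, ih,
      H_succ]
    push_cast
    ring

lemma sum_Ioc_one_div_sub_eq_H_sub {n m : ℕ} (h : m < n) :
    ∑ s ∈ Ioc 0 m, (1 : ℝ) / ((n : ℝ) - s) = H (n - 1) - H (n - 1 - m) := by
  rw [← sum_Ioc_one_div_eq_H_sub (Nat.sub_le _ _)]
  refine sum_nbij' (fun s => n - s) (fun t => n - t) ?_ ?_ ?_ ?_ fun s hs => ?_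
  any_goals (intro s hs; simp only [mem_Ioc] at hs ⊢; omega)
  rw [mem_Ioc] at hs
  rw [Nat.cast_sub (by omega)]

lemma min_mul_sub_max_div {n s k : ℕ} (hs : 0 < s) (hsn : s < n) :
    (min s k : ℝ) * ((n : ℝ) - (max s k : ℝ)) / ((s : ℝ) * ((n : ℝ) - s))
      = if s < k then ((n : ℝ) - k) / ((n : ℝ) - s) else (k : ℝ) / s := by
  have hs0 : (s : ℝ) ≠ 0 := by positivity
  have hns : (n : ℝ) - s ≠ 0 := sub_ne_zero.mpr (by exact_mod_cast hsn.ne')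
  split_ifs with hsk
  · have hsk : (s : ℝ) ≤ k := by exact_mod_cast hsk.le
    rw [min_eq_left hsk, max_eq_right hsk]
    field_simp
  · have hks : (k : ℝ) ≤ s := by exact_mod_cast not_lt.mp hsk
    rw [min_eq_right hks, max_eq_left hks]
    field_simp

lemma sum_min_mul_sub_max_div {n k : ℕ} (hk1 : 1 ≤ k) (hk : k ≤ n - 1) :
    ∑ s ∈ Icc 1 (n - 1),
        (min s k : ℝ) * ((n : ℝ) - (max s k : ℝ)) / ((s : ℝ) * ((n : ℝ) - s))
      = ((n : ℝ) - k) * (H (n - 1) - H (n - k)) + (k : ℝ) * (H (n - 1) - H (k - 1)) := by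
  rw [← zero_add 1, Icc_add_one_left_eq_Ioc,
    ← sum_Ioc_consecutive _ (Nat.zero_le (k - 1)) (by omega : k - 1 ≤ n - 1)]
  congr 1
  · rw [show n - k = n - 1 - (k - 1) by omega, ← sum_Ioc_one_div_sub_eq_H_sub (by omega),
      mul_sum]
    refine sum_congr rfl fun s hs => ?_
    rw [mem_Ioc] at hs
    rw [min_mul_sub_max_div (by omega) (by omega), if_pos (by omega), mul_one_div]
  · rw [← sum_Ioc_one_div_eq_H_sub (by omega), mul_sum]
    refine sum_congr rfl fun s hs => ?_
    rw [mem_Ioc] at hs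
    rw [min_mul_sub_max_div (by omega) (by omega), if_neg (by omega), mul_one_div]

theorem stmt5_general (n : ℕ) (α : ℝ)
    (q : ℕ → ℝ)
    (hq : ∀ s : ℕ, 1 ≤ s → s ≤ n - 1 →
      q s = α * (s : ℝ) * ((n : ℝ) - (s : ℝ)) / ((n : ℝ) * ((n : ℝ) - 1)))
    (k : ℕ) (hk1 : 1 ≤ k) (hk : k ≤ n - 1) :
    (1 / (n : ℝ)) *
        ∑ s ∈ Finset.Icc 1 (n - 1), (q s)⁻¹ * (min s k : ℝ) * ((n : ℝ) - (max s k : ℝ))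
      = (((n : ℝ) - 1) / α) *
        (((n : ℝ) - (k : ℝ)) * (H (n - 1) - H (n - k)) + (k : ℝ) * (H (n - 1) - H (k - 1))) := by
  have hn0 : (n : ℝ) ≠ 0 := by exact_mod_cast (by omega : n ≠ 0)
  have hq_inv : ∀ s ∈ Icc 1 (n - 1),
      (q s)⁻¹ * (min s k : ℝ) * ((n : ℝ) - (max s k : ℝ))
      = (n : ℝ) * (((n : ℝ) - 1) / α) *
        ((min s k : ℝ) * ((n : ℝ) - (max s k : ℝ)) / ((s : ℝ) * ((n : ℝ) - s))) := by
    intro s hs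
    rw [mem_Icc] at hs
    rw [hq s hs.1 hs.2]
    simp only [div_eq_mul_inv, mul_inv, inv_inv]
    ring
  rw [sum_congr rfl hq_inv, ← mul_sum, sum_min_mul_sub_max_div hk1 hk]
  field_simp

/-- The Glaz inversion formula for the unbiased birth-and-death chain on the clique:
`(1/n)·∑_{s=1}^{n-1} q_s⁻¹·min(s,k)·(n - max(s,k))
  = ((n-1)/α)·((n-k)(H_{n-1} - H_{n-k}) + k(H_{n-1} - H_{k-1}))`,
where `q_s = α·s(n-s)/(n(n-1))`. -/
theorem stmt5 (n : ℕ) (hn : 2 ≤ n) (α : ℝ) (hα0 : 0 < α) (hα1 : α ≤ 1)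
    (q : ℕ → ℝ)
    (hq : ∀ s : ℕ, 1 ≤ s → s ≤ n - 1 →
      q s = α * (s : ℝ) * ((n : ℝ) - (s : ℝ)) / ((n : ℝ) * ((n : ℝ) - 1)))
    (k : ℕ) (hk1 : 1 ≤ k) (hk : k ≤ n - 1) :
    (1 / (n : ℝ)) *
        ∑ s ∈ Finset.Icc 1 (n - 1), (q s)⁻¹ * (min s k : ℝ) * ((n : ℝ) - (max s k : ℝ))
      = (((n : ℝ) - 1) / α) *
        (((n : ℝ) - (k : ℝ)) * (H (n - 1) - H (n - k)) + (k : ℝ) * (H (n - 1) - H (k - 1))) :=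
  stmt5_general n α q hq k hk1 hk
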